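/- Let V be a finite-dimensional vector space over a field κ, and let (I_a)_{a∈ℝ} be an increasing and (I^b)_{b∈ℝ} a decreasing family of subspaces of V. Then dim((I_a ∩ I^b)/(I_{<a} ∩ I^b + I_a ∩ I^{>b})) is nonzero for only finitely many pairs (a,b), and Σ_{(a,b)} dim δ(a,b) ≤ dim V. -/

import Mathlib

/-!
Choose in each `I a ⊓ J b` a complement `W (a, b)` of the denominator of `δ(a, b)`, so that
`dim W (a, b) = dim δ(a, b)`. Order the pairs lexicographically by `(a, -b)`. Every earlier
`W (a', b')` lies in `I_{<a} ⊔ (I a ⊓ J^{>b})`, and by the modular law this meets `I a ⊓ J b`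
only inside the denominator, hence not at all in `W (a, b)`. So each `W` is disjoint from the
span of the earlier ones, their dimensions add up, and the total is at most `dim V`.
-/

open Module

theorem inf_inf_sup_inf_eq {α : Type*} [Lattice α] [IsModularLattice α] {i j a b : α}
    (ha : a ≤ i) (hb : b ≤ j) : i ⊓ j ⊓ (a ⊔ i ⊓ b) = a ⊓ j ⊔ i ⊓ b := by
  rw [sup_comm, inf_comm, sup_inf_assoc_of_le _ (inf_le_inf_left i hb), ← inf_assoc,
    inf_eq_left.2 ha, sup_comm]

theorem Set.finite_setOf_ne_zero_of_sum_le {α : Type*} (g : α → ℕ) (C : ℕ)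
    (h : ∀ t : Finset α, ∑ x ∈ t, g x ≤ C) : {x | g x ≠ 0}.Finite := by
  by_contra hinf
  obtain ⟨t, hts, htcard⟩ := Set.Infinite.exists_subset_card_eq hinf (C + 1)
  have := calc C + 1 = t.card • 1 := by rw [htcard, smul_eq_mul, mul_one]
    _ ≤ ∑ x ∈ t, g x :=
      Finset.card_nsmul_le_sum t g 1 fun x hx => Nat.one_le_iff_ne_zero.2 (hts hx)
    _ ≤ C := h t
  omega

namespace Submodule

variable {K V : Type*} [DivisionRing K] [AddCommGroup V] [Module K V]

theorem exists_le_disjoint_finrank_eq_finrank_quotient (N D : Submodule K V) :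
    ∃ W ≤ N, Disjoint W D ∧ finrank K W = finrank K (N ⧸ D.comap N.subtype) := by
  obtain ⟨U, hU⟩ := exists_isCompl (D.comap N.subtype)
  refine ⟨U.map N.subtype, map_subtype_le _ _, ?_, ?_⟩
  · rw [← inf_eq_left.2 (map_subtype_le N U), disjoint_assoc, ← map_comap_subtype]
    exact disjoint_map N.injective_subtype hU.symm.disjoint
  · rw [finrank_map_subtype_eq, (quotientEquivOfIsCompl _ _ hU).finrank_eq]

theorem finrank_finsetSup_eq_sum [FiniteDimensional K V] {ι β : Type*} [DecidableEq ι]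
    [LinearOrder β] {f : ι → β} (hf : Function.Injective f) {W X : ι → Submodule K V}
    (hWX : ∀ q, Disjoint (W q) (X q)) (hle : ∀ p q, f p < f q → W p ≤ X q) (t : Finset ι) :
    finrank K ↥(t.sup W) = ∑ p ∈ t, finrank K (W p) := by
  induction t using Finset.induction_on_max_value f with
  | empty => simp
  | insert q s hq hmax ih =>
    have hdisj : Disjoint (W q) (s.sup W) := (hWX q).mono_right <| Finset.sup_le fun p hp =>
      hle p q <| (hmax p hp).lt_of_ne (hf.ne (ne_of_mem_of_not_mem hp hq))
    rw [Finset.sup_insert, Finset.sum_insert hq, ← ih, ← finrank_sup_add_finrank_inf_eq,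
      disjoint_iff.1 hdisj, finrank_bot, add_zero]

end Submodule

theorem inf_le_iSup_lt_sup_inf_iSup_gt {α ι : Type*} [CompleteLattice α] [Preorder ι]
    (I J : ι → α) {p q : ι × ι}
    (h : toLex (p.1, OrderDual.toDual p.2) < toLex (q.1, OrderDual.toDual q.2)) :
    I p.1 ⊓ J p.2 ≤
      (⨆ a' : ι, ⨆ _ : a' < q.1, I a') ⊔ I q.1 ⊓ ⨆ b' : ι, ⨆ _ : q.2 < b', J b' := by
  rcases Prod.Lex.toLex_lt_toLex.1 h with h1 | ⟨h1, h2⟩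
  · exact le_sup_of_le_left (inf_le_left.trans (le_iSup₂_of_le p.1 h1 le_rfl))
  · rw [← h1]
    exact le_sup_of_le_right (inf_le_inf_left _ (le_iSup₂_of_le p.2 h2 le_rfl))

/-- For `V` finite-dimensional, `dim δ(a,b)` is nonzero for only finitely many pairs
`(a,b)`, and the total sum of these dimensions is at most `dim V`. -/
theorem stmt_14 {κ V : Type*} [Field κ] [AddCommGroup V] [Module κ V]
    [FiniteDimensional κ V]
    (I J : ℝ → Submodule κ V) (hI : Monotone I) (hJ : Antitone J)
    (d : ℝ → ℝ → ℕ)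
    (hd : ∀ a b : ℝ, d a b =
      finrank κ (↥(I a ⊓ J b) ⧸
        (((⨆ a' : ℝ, ⨆ _ : a' < a, I a') ⊓ J b) ⊔
          (I a ⊓ ⨆ b' : ℝ, ⨆ _ : b < b', J b')).comap (I a ⊓ J b).subtype)) :
    {p : ℝ × ℝ | d p.1 p.2 ≠ 0}.Finite ∧
    ∀ t : Finset (ℝ × ℝ), ∑ p ∈ t, d p.1 p.2 ≤ finrank κ V := by
  set Ilt : ℝ → Submodule κ V := fun a => ⨆ a' : ℝ, ⨆ _ : a' < a, I a'
  set Jgt : ℝ → Submodule κ V := fun b => ⨆ b' : ℝ, ⨆ _ : b < b', J b'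
  choose W hWN hWD hWd using fun p : ℝ × ℝ =>
    Submodule.exists_le_disjoint_finrank_eq_finrank_quotient (I p.1 ⊓ J p.2)
      (Ilt p.1 ⊓ J p.2 ⊔ I p.1 ⊓ Jgt p.2)
  have hWX : ∀ q, Disjoint (W q) (Ilt q.1 ⊔ I q.1 ⊓ Jgt q.2) := fun q => by
    rw [← inf_eq_left.2 (hWN q), disjoint_assoc]
    exact (hWD q).mono_right (inf_inf_sup_inf_eq (iSup₂_le fun a' h => hI h.le)
      (iSup₂_le fun b' h => hJ h.le)).le
  have hdW : ∀ p : ℝ × ℝ, d p.1 p.2 = finrank κ (W p) := fun p =>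
    (hd p.1 p.2).trans (hWd p).symm
  have hf : Function.Injective fun p : ℝ × ℝ => toLex (p.1, OrderDual.toDual p.2) :=
    fun p q h => by
      simp only [toLex_inj, Prod.mk.injEq, OrderDual.toDual_inj] at h
      exact Prod.ext h.1 h.2
  have hsum : ∀ t : Finset (ℝ × ℝ), ∑ p ∈ t, d p.1 p.2 ≤ finrank κ V := fun t => by
    simp only [hdW]
    rw [← Submodule.finrank_finsetSup_eq_sum hf hWX
      (fun p q h => (hWN p).trans (inf_le_iSup_lt_sup_inf_iSup_gt I J h))]
    exact Submodule.finrank_le _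
  exact ⟨Set.finite_setOf_ne_zero_of_sum_le _ _ hsum, hsum⟩
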